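/- arXiv:1410.0072 — 5 statements merged into one kernel-verified Lean document; each statement's English description precedes it below -/
import Mathlib

section
/- The additive monoid P₃ is generated by the following 12 elements: for each pair 1 ≤ i < j ≤ 3 and each choice of s ∈ {x,y} at index i and t ∈ {x,y} at index j, the element of ℕ⁶ whose s-coordinate at index i is 1, whose t-coordinate at index j is 1, and whose other four coordinates are 0. (These are the generators X₍ᵢ,ₛ₎,₍ⱼ,ₜ₎ of the affine semigroup P₃, whose semigroup algebra is ℂ[M₃(SL₂(ℂ)ᶜ)].) -/
/-!
Let `v ∈ P3` be nonzero with block sums `a, b, c`, where `c` is the smallest. Then `a, b ≥ 1`,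
and subtracting a generator that takes one unit from each of the blocks of `a` and `b` stays
in `P3`: the only bound that could fail is `c ≤ (a - 1) + (b - 1)`, and `c ≥ a + b - 1` together
with `c ≤ a, b` would make `a + b + c` odd. Well-founded induction on `v` finishes the proof.
-/

/-- The affine semigroup P₃ ⊂ ℕ⁶ of tuples (x₁,y₁,x₂,y₂,x₃,y₃) (coordinates
v 0, …, v 5) such that, with a = x₁+y₁, b = x₂+y₂, c = x₃+y₃, the sum a+b+c is
even and a, b, c satisfy the triangle inequalities. -/
def P3 : AddSubmonoid (Fin 6 → ℕ) where
  carrier := {v | Even ((v 0 + v 1) + (v 2 + v 3) + (v 4 + v 5)) ∧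
      v 0 + v 1 ≤ (v 2 + v 3) + (v 4 + v 5) ∧
      v 2 + v 3 ≤ (v 0 + v 1) + (v 4 + v 5) ∧
      v 4 + v 5 ≤ (v 0 + v 1) + (v 2 + v 3)}
  zero_mem' := by
    refine ⟨?_, ?_, ?_, ?_⟩ <;> simp
  add_mem' := by
    intro x y hx hy
    obtain ⟨⟨px, hpx⟩, hx2, hx3, hx4⟩ := hx
    obtain ⟨⟨py, hpy⟩, hy2, hy3, hy4⟩ := hy
    refine ⟨⟨px + py, ?_⟩, ?_, ?_, ?_⟩ <;> simp only [Pi.add_apply] <;> omega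

/-- The 12 generators X₍ᵢ,ₛ₎,₍ⱼ,ₜ₎ for 1 ≤ i < j ≤ 3 and s, t ∈ {x,y}: the tuple
with a 1 in the s-coordinate at index i and a 1 in the t-coordinate at index j
(coordinate (i,s) sits at position 2i+s of Fin 6) and 0 elsewhere. -/
def pairGens : Set (Fin 6 → ℕ) :=
  {v | ∃ (i j : Fin 3) (s t : Fin 2), i < j ∧
      v = Pi.single (⟨2 * i.val + s.val, by have := i.2; have := s.2; omega⟩ : Fin 6) 1
        + Pi.single (⟨2 * j.val + t.val, by have := j.2; have := t.2; omega⟩ : Fin 6) 1}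

theorem AddSubmonoid.closure_eq_of_forall_eq_add_lt {M : Type*} [AddMonoid M] [Preorder M]
    [WellFoundedLT M] {G : Set M} {P : AddSubmonoid M} (hGP : G ⊆ P)
    (hsplit : ∀ v ∈ P, v ≠ 0 → ∃ g ∈ G, ∃ w ∈ P, w < v ∧ v = g + w) :
    closure G = P := by
  refine le_antisymm (closure_le.2 hGP) fun v ↦
    WellFoundedLT.induction (motive := fun v ↦ v ∈ P → v ∈ closure G) v fun v ih hv ↦ ?_
  rcases eq_or_ne v 0 with rfl | hv0
  · exact zero_mem _
  obtain ⟨g, hg, w, hw, hwv, rfl⟩ := hsplit v hv hv0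
  exact add_mem (subset_closure hg) (ih w hwv hw)

theorem Pi.single_add_single_le {ι : Type*} [DecidableEq ι] {v : ι → ℕ} {p q : ι} (hpq : p ≠ q)
    (hp : 1 ≤ v p) (hq : 1 ≤ v q) : Pi.single p 1 + Pi.single q 1 ≤ v := by
  intro k
  rcases eq_or_ne k p with rfl | hkp
  · simpa [hpq]
  rcases eq_or_ne k q with rfl | hkq
  · simpa [hkp]
  simp [hkp, hkq]

theorem mem_P3_iff {v : Fin 6 → ℕ} :
    v ∈ P3 ↔ (v 0 + v 1 + (v 2 + v 3) + (v 4 + v 5)) % 2 = 0 ∧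
      v 0 + v 1 ≤ (v 2 + v 3) + (v 4 + v 5) ∧
      v 2 + v 3 ≤ (v 0 + v 1) + (v 4 + v 5) ∧
      v 4 + v 5 ≤ (v 0 + v 1) + (v 2 + v 3) := by
  rw [← Nat.even_iff]; rfl

theorem pairGens_subset_P3 : pairGens ⊆ P3 := by
  rintro v ⟨i, j, s, t, hij, rfl⟩
  rw [SetLike.mem_coe, mem_P3_iff]
  revert i j s t
  decide

theorem single_add_single_mem_pairGens {p q : Fin 6} (hpq : p.val / 2 < q.val / 2) :
    Pi.single p 1 + Pi.single q 1 ∈ pairGens := by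
  refine ⟨⟨p / 2, by omega⟩, ⟨q / 2, by omega⟩, ⟨p % 2, by omega⟩, ⟨q % 2, by omega⟩,
    Fin.mk_lt_mk.2 hpq, ?_⟩
  simp only [Nat.div_add_mod]

theorem exists_pair_sub_mem_P3 {v : Fin 6 → ℕ} (hv : v ∈ P3) (hv0 : v ≠ 0) :
    ∃ p q : Fin 6, p.val / 2 < q.val / 2 ∧ 1 ≤ v p ∧ 1 ≤ v q ∧
      v - (Pi.single p 1 + Pi.single q 1) ∈ P3 := by
  have hpos : 0 < v 0 + v 1 + (v 2 + v 3) + (v 4 + v 5) := by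
    by_contra! h
    exact hv0 (funext fun k ↦ by fin_cases k <;> simp <;> omega)
  rw [mem_P3_iff] at hv
  rcases (show (v 4 + v 5 ≤ v 0 + v 1 ∧ v 4 + v 5 ≤ v 2 + v 3) ∨
      (v 2 + v 3 ≤ v 0 + v 1 ∧ v 2 + v 3 ≤ v 4 + v 5) ∨
      (v 0 + v 1 ≤ v 2 + v 3 ∧ v 0 + v 1 ≤ v 4 + v 5) by omega) with h | h | h
  · rcases (show 1 ≤ v 0 ∨ 1 ≤ v 1 by omega) with hp | hp <;>
    rcases (show 1 ≤ v 2 ∨ 1 ≤ v 3 by omega) with hq | hq <;>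
    refine ⟨_, _, by decide, hp, hq, ?_⟩ <;>
    simp [mem_P3_iff] <;> omega
  · rcases (show 1 ≤ v 0 ∨ 1 ≤ v 1 by omega) with hp | hp <;>
    rcases (show 1 ≤ v 4 ∨ 1 ≤ v 5 by omega) with hq | hq <;>
    refine ⟨_, _, by decide, hp, hq, ?_⟩ <;>
    simp [mem_P3_iff] <;> omega
  · rcases (show 1 ≤ v 2 ∨ 1 ≤ v 3 by omega) with hp | hp <;>
    rcases (show 1 ≤ v 4 ∨ 1 ≤ v 5 by omega) with hq | hq <;>
    refine ⟨_, _, by decide, hp, hq, ?_⟩ <;>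
    simp [mem_P3_iff] <;> omega

/-- The additive monoid P₃ is generated by the 12 elements X₍ᵢ,ₛ₎,₍ⱼ,ₜ₎. -/
theorem P3_generated_by_pairs : AddSubmonoid.closure pairGens = P3 := by
  refine AddSubmonoid.closure_eq_of_forall_eq_add_lt pairGens_subset_P3 fun v hv hv0 ↦ ?_
  obtain ⟨p, q, hpq, hp, hq, hw⟩ := exists_pair_sub_mem_P3 hv hv0
  have hle := Pi.single_add_single_le (by rintro rfl; omega) hp hq
  refine ⟨_, single_add_single_mem_pairGens hpq, _, hw, ?_, (add_tsub_cancel_of_le hle).symm⟩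
  exact Pi.lt_def.2 ⟨tsub_le_self, p, by simp; omega⟩
end

section
/- Let R̄ := ℂ[a,b,c,d,t]/(ad - bc - t²). The quotient of R̄ by the ideal generated by the class of t is isomorphic as a ℂ-algebra to the monoid algebra ℂ[P], via the map sending the classes of a, b, c, d to the monoid-algebra basis elements corresponding to (0,0,1), (0,1,1), (1,0,1), (1,1,1) ∈ P respectively. (The boundary divisor D ⊂ X = Proj(R̄) is cut out by t, and the associated graded algebra of the filtration F on ℂ[SL₂(ℂ)] is ℂ[P].) -/
/-!
Modulo `t` the defining relation becomes `ad = bc`. On the other side, every `p ∈ P` is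
`u•A + j•B + i•C + v•D` for the generators `A = (0,0,1)`, `B = (0,1,1)`, `C = (1,0,1)`,
`D = (1,1,1)`, and trading `B + C` for `A + D` makes this unique once `B` and `C` do not both
occur. So `P` is presented by `A, B, C, D` subject to `A + D = B + C`, a monoid map out of `P`
is a quadruple with `ad = bc`, and `[p] ↦` (the normal-form monomial) is inverse to
`a, b, c, d, t ↦ [A], [B], [C], [D], 0`, as is checked on generators.
-/

open MvPolynomial

/-- The ideal (ad - bc - t²) in ℂ[a,b,c,d,t], where the variables
X 0, X 1, X 2, X 3, X 4 are a, b, c, d, t respectively. -/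
noncomputable def relIdealBar : Ideal (MvPolynomial (Fin 5) ℂ) :=
  Ideal.span {X 0 * X 3 - X 1 * X 2 - X 4 ^ 2}

abbrev ReesRBar : Type := MvPolynomial (Fin 5) ℂ ⧸ relIdealBar

noncomputable def tclBar : ReesRBar := Ideal.Quotient.mk relIdealBar (X 4)

/-- The affine semigroup P = {(x,y,z) ∈ ℤ³ : 0 ≤ x ≤ z, 0 ≤ y ≤ z}, the lattice
points of the cone spanned by (0,0,1), (1,0,1), (0,1,1), (1,1,1). -/
def P : AddSubmonoid (ℤ × ℤ × ℤ) where
  carrier := {p | 0 ≤ p.1 ∧ p.1 ≤ p.2.2 ∧ 0 ≤ p.2.1 ∧ p.2.1 ≤ p.2.2}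
  zero_mem' := ⟨le_refl 0, le_refl 0, le_refl 0, le_refl 0⟩
  add_mem' := by
    rintro ⟨a1, a2, a3⟩ ⟨b1, b2, b3⟩ ⟨h1, h2, h3, h4⟩ ⟨k1, k2, k3, k4⟩
    refine ⟨?_, ?_, ?_, ?_⟩ <;> simp only [Prod.fst_add, Prod.snd_add] at * <;> omega

def pA : P := ⟨(0, 0, 1), by norm_num [P]⟩
def pB : P := ⟨(0, 1, 1), by norm_num [P]⟩
def pC : P := ⟨(1, 0, 1), by norm_num [P]⟩
def pD : P := ⟨(1, 1, 1), by norm_num [P]⟩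
namespace P

theorem coe_nsmul_add (u j i v : ℕ) :
    ((u • pA + j • pB + i • pC + v • pD : P) : ℤ × ℤ × ℤ)
      = ((i : ℤ) + v, (j : ℤ) + v, (u : ℤ) + j + i + v) := by
  simp only [AddSubmonoid.coe_add, AddSubmonoidClass.coe_nsmul, pA, pB, pC, pD, Prod.smul_mk,
    Prod.mk_add_mk, nsmul_eq_mul, mul_zero, mul_one]
  ring_nf

theorem exists_eq_nsmul_add (p : P) :
    ∃ u j i v : ℕ, p = u • pA + j • pB + i • pC + v • pD := by
  obtain ⟨⟨x, y, z⟩, hp⟩ := p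
  obtain ⟨hx, hxz, hy, hyz⟩ : 0 ≤ x ∧ x ≤ z ∧ 0 ≤ y ∧ y ≤ z := hp
  refine ⟨(z - max x y).toNat, (y - min x y).toNat, (x - min x y).toNat, (min x y).toNat, ?_⟩
  apply Subtype.ext
  rw [coe_nsmul_add]
  simp only [Prod.mk.injEq]
  omega

theorem pA_add_pD : pA + pD = pB + pC := rfl

section Lift

variable {M : Type*} [CommMonoid M] (a b c d : M)

/-- Evaluates at `(a, b, c, d)` the normal form of `p` as a monomial in `pA, pB, pC, pD` in
which `pB` and `pC` do not both occur. -/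
def liftFun (p : P) : M :=
  a ^ (p.1.2.2 - max p.1.1 p.1.2.1).toNat * b ^ (p.1.2.1 - min p.1.1 p.1.2.1).toNat *
    c ^ (p.1.1 - min p.1.1 p.1.2.1).toNat * d ^ (min p.1.1 p.1.2.1).toNat

theorem liftFun_nsmul_add (h : a * d = b * c) (u j i v : ℕ) :
    liftFun a b c d (u • pA + j • pB + i • pC + v • pD) = a ^ u * b ^ j * c ^ i * d ^ v := by
  set k := min i j
  have ea : ((u : ℤ) + j + i + v - max ((i : ℤ) + v) ((j : ℤ) + v)).toNat = u + k := by omega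
  have eb : ((j : ℤ) + v - min ((i : ℤ) + v) ((j : ℤ) + v)).toNat = j - k := by omega
  have ec : ((i : ℤ) + v - min ((i : ℤ) + v) ((j : ℤ) + v)).toNat = i - k := by omega
  have ed : (min ((i : ℤ) + v) ((j : ℤ) + v)).toNat = v + k := by omega
  rw [liftFun, coe_nsmul_add, ea, eb, ec, ed]
  calc a ^ (u + k) * b ^ (j - k) * c ^ (i - k) * d ^ (v + k)
      = a ^ u * b ^ (j - k) * c ^ (i - k) * d ^ v * (a * d) ^ k := by
        simp only [pow_add, mul_pow]; ac_rfl
    _ = a ^ u * (b ^ (j - k) * b ^ k) * (c ^ (i - k) * c ^ k) * d ^ v := by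
        rw [h, mul_pow]; ac_rfl
    _ = a ^ u * b ^ j * c ^ i * d ^ v := by
      rw [pow_sub_mul_pow b (min_le_right i j), pow_sub_mul_pow c (min_le_left i j)]

def lift (h : a * d = b * c) : Multiplicative P →* M where
  toFun p := liftFun a b c d p.toAdd
  map_one' := by simpa using liftFun_nsmul_add a b c d h 0 0 0 0
  map_mul' p q := by
    obtain ⟨u, j, i, v, hp⟩ := exists_eq_nsmul_add p.toAdd
    obtain ⟨u', j', i', v', hq⟩ := exists_eq_nsmul_add q.toAdd
    have hpq : (p * q).toAdd = (u + u') • pA + (j + j') • pB + (i + i') • pC + (v + v') • pD := by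
      rw [toAdd_mul, hp, hq]
      simp only [add_nsmul]
      abel
    rw [hpq, hp, hq]
    simp only [liftFun_nsmul_add a b c d h, pow_add]
    ac_rfl

theorem lift_ofAdd_nsmul_add (h : a * d = b * c) (u j i v : ℕ) :
    lift a b c d h (.ofAdd (u • pA + j • pB + i • pC + v • pD))
      = a ^ u * b ^ j * c ^ i * d ^ v :=
  liftFun_nsmul_add a b c d h u j i v

@[simp]
theorem lift_ofAdd_pA (h : a * d = b * c) : lift a b c d h (.ofAdd pA) = a := by
  simpa using lift_ofAdd_nsmul_add a b c d h 1 0 0 0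

@[simp]
theorem lift_ofAdd_pB (h : a * d = b * c) : lift a b c d h (.ofAdd pB) = b := by
  simpa using lift_ofAdd_nsmul_add a b c d h 0 1 0 0

@[simp]
theorem lift_ofAdd_pC (h : a * d = b * c) : lift a b c d h (.ofAdd pC) = c := by
  simpa using lift_ofAdd_nsmul_add a b c d h 0 0 1 0

@[simp]
theorem lift_ofAdd_pD (h : a * d = b * c) : lift a b c d h (.ofAdd pD) = d := by
  simpa using lift_ofAdd_nsmul_add a b c d h 0 0 0 1

end Lift

theorem hom_ext {M : Type*} [Monoid M] {f g : Multiplicative P →* M}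
    (hA : f (.ofAdd pA) = g (.ofAdd pA)) (hB : f (.ofAdd pB) = g (.ofAdd pB))
    (hC : f (.ofAdd pC) = g (.ofAdd pC)) (hD : f (.ofAdd pD) = g (.ofAdd pD)) : f = g := by
  refine MonoidHom.ext fun p => ?_
  obtain ⟨u, j, i, v, hp⟩ := exists_eq_nsmul_add p.toAdd
  rw [← ofAdd_toAdd p, hp]
  simp only [ofAdd_add, ofAdd_nsmul, map_mul, map_pow, hA, hB, hC, hD]

end P

open AddMonoidAlgebra

noncomputable section

abbrev SpecialFiber : Type := ReesRBar ⧸ Ideal.span {tclBar}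

namespace SpecialFiber

def mk : MvPolynomial (Fin 5) ℂ →ₐ[ℂ] SpecialFiber :=
  (Ideal.Quotient.mkₐ ℂ _).comp (Ideal.Quotient.mkₐ ℂ relIdealBar)

theorem mk_X_four : mk (X 4) = 0 :=
  Ideal.Quotient.eq_zero_iff_mem.2 (Ideal.mem_span_singleton_self _)

theorem mk_X_zero_mul_mk_X_three : mk (X 0) * mk (X 3) = mk (X 1) * mk (X 2) := by
  have hrel : mk (X 0 * X 3 - X 1 * X 2 - X 4 ^ 2) = 0 := by
    have : Ideal.Quotient.mk relIdealBar (X 0 * X 3 - X 1 * X 2 - X 4 ^ 2) = 0 :=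
      Ideal.Quotient.eq_zero_iff_mem.2 (Ideal.mem_span_singleton_self _)
    exact (congrArg (Ideal.Quotient.mk _) this).trans (map_zero _)
  simp only [map_sub, map_mul, map_pow] at hrel
  linear_combination hrel + mk (X 4) * mk_X_four

theorem algHom_ext {A : Type*} [Semiring A] [Algebra ℂ A] {f g : SpecialFiber →ₐ[ℂ] A}
    (h : ∀ i, f (mk (X i)) = g (mk (X i))) : f = g :=
  Ideal.Quotient.algHom_ext ℂ <| Ideal.Quotient.algHom_ext ℂ <| MvPolynomial.algHom_ext h

def imageX : Fin 5 → AddMonoidAlgebra ℂ P :=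
  ![single pA 1, single pB 1, single pC 1, single pD 1, 0]

theorem aeval_imageX_relation :
    aeval imageX (X 0 * X 3 - X 1 * X 2 - X 4 ^ 2 : MvPolynomial (Fin 5) ℂ) = 0 := by
  simp [imageX, single_mul_single, P.pA_add_pD]

theorem aeval_imageX_eq_zero_of_mem {x : MvPolynomial (Fin 5) ℂ} (hx : x ∈ relIdealBar) :
    aeval imageX x = 0 := by
  obtain ⟨y, rfl⟩ := Ideal.mem_span_singleton'.1 hx
  rw [map_mul, aeval_imageX_relation, mul_zero]

def toMonoidAlgebra : SpecialFiber →ₐ[ℂ] AddMonoidAlgebra ℂ P :=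
  Ideal.Quotient.liftₐ _
    (Ideal.Quotient.liftₐ relIdealBar
      (aeval imageX) fun _ => aeval_imageX_eq_zero_of_mem)
    fun x hx => by
      obtain ⟨y, rfl⟩ := Ideal.mem_span_singleton'.1 hx
      rw [map_mul]
      exact mul_eq_zero_of_right _ (aeval_X imageX 4)

@[simp]
theorem toMonoidAlgebra_mk (x : MvPolynomial (Fin 5) ℂ) :
    toMonoidAlgebra (mk x) = aeval imageX x :=
  rfl

def ofMonoidAlgebra : AddMonoidAlgebra ℂ P →ₐ[ℂ] SpecialFiber :=
  AddMonoidAlgebra.lift ℂ _ P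
    (P.lift (mk (X 0)) (mk (X 1)) (mk (X 2)) (mk (X 3)) mk_X_zero_mul_mk_X_three)

theorem ofMonoidAlgebra_comp_toMonoidAlgebra :
    ofMonoidAlgebra.comp toMonoidAlgebra = AlgHom.id ℂ SpecialFiber := by
  refine algHom_ext fun i => ?_
  fin_cases i <;> simp [imageX, ofMonoidAlgebra, mk_X_four]

theorem toMonoidAlgebra_comp_ofMonoidAlgebra :
    toMonoidAlgebra.comp ofMonoidAlgebra = AlgHom.id ℂ (AddMonoidAlgebra ℂ P) := by
  refine AddMonoidAlgebra.algHom_ext' (P.hom_ext ?_ ?_ ?_ ?_) (Subsingleton.elim _ _) <;>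
    simp [imageX, ofMonoidAlgebra]

end SpecialFiber

end

/-- The quotient of R̄ = ℂ[a,b,c,d,t]/(ad - bc - t²) by the ideal generated by the
class of t is ℂ-algebra isomorphic to the monoid algebra ℂ[P], via the map sending
the classes of a, b, c, d to the basis elements at (0,0,1), (0,1,1), (1,0,1),
(1,1,1) ∈ P respectively. -/
theorem special_fiber_bar_iso_semigroup_algebra :
    ∃ e : (ReesRBar ⧸ Ideal.span {tclBar}) ≃ₐ[ℂ] AddMonoidAlgebra ℂ P,
      e (Ideal.Quotient.mk (Ideal.span {tclBar}) (Ideal.Quotient.mk relIdealBar (X 0)))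
          = AddMonoidAlgebra.single pA 1 ∧
      e (Ideal.Quotient.mk (Ideal.span {tclBar}) (Ideal.Quotient.mk relIdealBar (X 1)))
          = AddMonoidAlgebra.single pB 1 ∧
      e (Ideal.Quotient.mk (Ideal.span {tclBar}) (Ideal.Quotient.mk relIdealBar (X 2)))
          = AddMonoidAlgebra.single pC 1 ∧
      e (Ideal.Quotient.mk (Ideal.span {tclBar}) (Ideal.Quotient.mk relIdealBar (X 3)))
          = AddMonoidAlgebra.single pD 1 :=
  ⟨AlgEquiv.ofAlgHom SpecialFiber.toMonoidAlgebra SpecialFiber.ofMonoidAlgebra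
      SpecialFiber.toMonoidAlgebra_comp_ofMonoidAlgebra
      SpecialFiber.ofMonoidAlgebra_comp_toMonoidAlgebra,
    aeval_X _ 0, aeval_X _ 1, aeval_X _ 2, aeval_X _ 3⟩
end

section
/- Let A and B be commutative ℂ-algebras that are integral domains, let v be a valuation on A and w a valuation on B (both lifting the trivial valuation on ℂ). For m ∈ ℝ let F≤m ⊆ A ⊗_ℂ B be the ℂ-subspace of elements admitting a representation Σᵢ aᵢ ⊗ bᵢ with v(aᵢ) + w(bᵢ) ≤ m for every i, and let F<m be the union of the F≤m' over m' < m; similarly set v≤i = {a ∈ A : v(a) ≤ i}, v<i = {a ∈ A : v(a) < i}, and likewise w≤j, w<j. Then for every m ∈ ℝ there is an isomorphism of ℂ-vector spaces F≤m / F<m ≅ ⊕_{(i,j) ∈ ℝ², i+j=m} (v≤i / v<i) ⊗_ℂ (w≤j / w<j), where only finitely many summands are nonzero on any element. (Hence the associated graded algebra of the sum filtration on A ⊗ B is gr_v(A) ⊗ gr_w(B).) -/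
/-!
For `i + j = m` the maps `(a mod v<i) ⊗ (b mod w<j) ↦ a ⊗ b mod F<m` are well defined, since
`v a + w b < m` as soon as `v a < i` or `w b < j`. Their sum is surjective: a generator `a ⊗ b`
of `F≤m` either lies in `F<m` or has `v a + w b = m` with `v a` and `w b` finite.
For injectivity, functionals `f, g` on `gr_i`, `gr_j` extend to functionals `f', g'` on `A`, `B`
vanishing below degree `i`, `j`. Then `a ⊗ b ↦ f' a * g' b` kills `F<m` and every summand
`(i', j') ≠ (i, j)` (there `i' < i` or `j' < j`), so it reads off `f ⊗ g` on the
`(i, j)`-component; and the functionals `f ⊗ g` separate the points of a tensor product of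
vector spaces.
-/

open scoped TensorProduct DirectSum

open Module TensorProduct

theorem TensorProduct.eq_zero_of_forall_dualDistrib_eq_zero {K V W : Type*} [Field K]
    [AddCommGroup V] [Module K V] [AddCommGroup W] [Module K W] {t : V ⊗[K] W}
    (h : ∀ (f : Dual K V) (g : Dual K W), dualDistrib K V W (f ⊗ₜ g) t = 0) : t = 0 := by
  let b := Basis.ofVectorSpace K V
  let c := Basis.ofVectorSpace K W
  suffices (b.tensorProduct c).repr t = 0 from (b.tensorProduct c).repr.map_eq_zero_iff.mp this
  ext ⟨k, l⟩
  have hcoord : Finsupp.lapply (k, l) ∘ₗ ((b.tensorProduct c).repr : V ⊗[K] W →ₗ[K] _) =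
      dualDistrib K V W (b.coord k ⊗ₜ c.coord l) :=
    TensorProduct.ext' fun x y => by
      simp [Basis.tensorProduct_repr_tmul_apply, dualDistrib_apply, mul_comm]
  simpa [h] using LinearMap.congr_fun hcoord t

theorem WithBot.add_lt_coe_add_coe_of_lt_of_le {α : Type*} [Add α] [Preorder α]
    [AddLeftMono α] [AddRightStrictMono α] {x y : WithBot α} {i j : α}
    (hx : x < i) (hy : y ≤ j) : x + y < (i : WithBot α) + j := by
  rcases eq_or_ne y ⊥ with rfl | hy_ne
  · simp
  · exact WithBot.add_lt_add_of_lt_of_le hy_ne hx hy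

theorem Prod.fst_lt_or_snd_lt_of_add_eq_add {α : Type*} [AddCommMonoid α] [LinearOrder α]
    [IsOrderedCancelAddMonoid α] {p q : α × α} (h : p.1 + p.2 = q.1 + q.2) (hne : p ≠ q) :
    p.1 < q.1 ∨ p.2 < q.2 := by
  by_contra! hle
  obtain ⟨h1, h2⟩ := (add_eq_add_iff_eq_and_eq hle.1 hle.2).mp h.symm
  exact hne (Prod.ext h1.symm h2.symm)

namespace DegreeFiltration

variable {K V W : Type*} [Field K] [AddCommGroup V] [Module K V] [AddCommGroup W] [Module K W]

variable (K) in
/-- Exactly what makes the sets `{a | v a ≤ x}` and `{a | v a < x}` subspaces. -/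
structure IsDegreeFunction (v : V → WithBot ℝ) : Prop where
  apply_zero : v 0 = ⊥
  apply_add_le : ∀ a b, v (a + b) ≤ max (v a) (v b)
  apply_smul_le : ∀ (c : K) a, v (c • a) ≤ v a

theorem IsDegreeFunction.of_valuation {R : Type*} [Ring R] [Algebra K R] {v : R → WithBot ℝ}
    (hmul : ∀ a b, v (a * b) = v a + v b) (hadd : ∀ a b, v (a + b) ≤ max (v a) (v b))
    (hunit : ∀ c : K, c ≠ 0 → v (algebraMap K R c) = 0) (hzero : v 0 = ⊥) :
    IsDegreeFunction K v where
  apply_zero := hzero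
  apply_add_le := hadd
  apply_smul_le c a := by
    rcases eq_or_ne c 0 with rfl | hc
    · simp [hzero]
    · rw [Algebra.smul_def, hmul, hunit c hc, zero_add]

variable (K) in
def sublevel (v : V → WithBot ℝ) (i : ℝ) : Submodule K V :=
  Submodule.span K {a | v a ≤ (i : WithBot ℝ)}

variable (K) in
def strictSublevel (v : V → WithBot ℝ) (i : ℝ) : Submodule K V :=
  Submodule.span K {a | v a < (i : WithBot ℝ)}

variable (K) in
abbrev gradedPiece (v : V → WithBot ℝ) (i : ℝ) : Type _ :=
  ↥(sublevel K v i) ⧸ (strictSublevel K v i).comap (sublevel K v i).subtype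

variable (K) in
def tensorSublevel (v : V → WithBot ℝ) (w : W → WithBot ℝ) (r : ℝ) :
    Submodule K (V ⊗[K] W) :=
  Submodule.span K {x | ∃ (a : V) (b : W), v a + w b ≤ (r : WithBot ℝ) ∧ x = a ⊗ₜ[K] b}

variable (K) in
def tensorStrictSublevel (v : V → WithBot ℝ) (w : W → WithBot ℝ) (m : ℝ) :
    Submodule K (V ⊗[K] W) :=
  ⨆ (r : ℝ) (_ : r < m), tensorSublevel K v w r

variable (K) in
abbrev tensorGradedPiece (v : V → WithBot ℝ) (w : W → WithBot ℝ) (m : ℝ) : Type _ :=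
  ↥(tensorSublevel K v w m) ⧸
    (tensorStrictSublevel K v w m).comap (tensorSublevel K v w m).subtype

variable (K) in
abbrev gradedTensor (v : V → WithBot ℝ) (w : W → WithBot ℝ) (m : ℝ) : Type _ :=
  ⨁ p : {p : ℝ × ℝ // p.1 + p.2 = m}, gradedPiece K v p.1.1 ⊗[K] gradedPiece K w p.1.2

theorem IsDegreeFunction.mem_span_preimage_iff {v : V → WithBot ℝ} (hv : IsDegreeFunction K v)
    {S : Set (WithBot ℝ)} (hS : IsLowerSet S) (hbot : ⊥ ∈ S) {a : V} :
    a ∈ Submodule.span K (v ⁻¹' S) ↔ v a ∈ S := by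
  refine ⟨fun ha => ?_, fun ha => Submodule.subset_span ha⟩
  induction ha using Submodule.span_induction with
  | mem x hx => exact hx
  | zero => rwa [hv.apply_zero]
  | add x y _ _ hx hy =>
    refine hS (hv.apply_add_le x y) ?_
    rcases max_choice (v x) (v y) with h | h <;> rwa [h]
  | smul c x _ hx => exact hS (hv.apply_smul_le c x) hx

theorem IsDegreeFunction.mem_sublevel {v : V → WithBot ℝ} (hv : IsDegreeFunction K v)
    {i : ℝ} {a : V} : a ∈ sublevel K v i ↔ v a ≤ i :=
  hv.mem_span_preimage_iff (isLowerSet_Iic _) (bot_le : ⊥ ≤ (i : WithBot ℝ))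

theorem IsDegreeFunction.mem_strictSublevel {v : V → WithBot ℝ} (hv : IsDegreeFunction K v)
    {i : ℝ} {a : V} : a ∈ strictSublevel K v i ↔ v a < i :=
  hv.mem_span_preimage_iff (isLowerSet_Iio _) (WithBot.bot_lt_coe i)

section tensor

variable {v : V → WithBot ℝ} {w : W → WithBot ℝ}

theorem tmul_mem_tensorSublevel {r : ℝ} {a : V} {b : W} (h : v a + w b ≤ r) :
    a ⊗ₜ[K] b ∈ tensorSublevel K v w r :=
  Submodule.subset_span ⟨a, b, h, rfl⟩

theorem tmul_mem_tensorStrictSublevel {m : ℝ} {a : V} {b : W} (h : v a + w b < m) :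
    a ⊗ₜ[K] b ∈ tensorStrictSublevel K v w m := by
  obtain ⟨r, hle, hr⟩ : ∃ r : ℝ, v a + w b ≤ r ∧ r < m := by
    cases hx : v a + w b with
    | bot => exact ⟨m - 1, bot_le, by linarith⟩
    | coe t => exact ⟨t, le_rfl, by rwa [hx, WithBot.coe_lt_coe] at h⟩
  exact Submodule.mem_iSup_of_mem r (Submodule.mem_iSup_of_mem hr (tmul_mem_tensorSublevel hle))

theorem tensorStrictSublevel_le_ker {P : Type*} [AddCommGroup P] [Module K P] {m : ℝ}
    (f : V ⊗[K] W →ₗ[K] P) (hf : ∀ a b, v a + w b < m → f (a ⊗ₜ b) = 0) :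
    tensorStrictSublevel K v w m ≤ LinearMap.ker f := by
  refine iSup₂_le fun r hr => Submodule.span_le.mpr ?_
  rintro _ ⟨a, b, hab, rfl⟩
  exact hf a b (hab.trans_lt (WithBot.coe_lt_coe.mpr hr))

variable (hv : IsDegreeFunction K v) (hw : IsDegreeFunction K w) {m : ℝ}

def sublevelTmul {i j : ℝ} (hij : i + j = m) :
    sublevel K v i →ₗ[K] sublevel K w j →ₗ[K] tensorSublevel K v w m :=
  LinearMap.mk₂ K
    (fun a b => ⟨a.1 ⊗ₜ b.1, tmul_mem_tensorSublevel <| by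
      rw [← hij, WithBot.coe_add]
      exact add_le_add (hv.mem_sublevel.mp a.2) (hw.mem_sublevel.mp b.2)⟩)
    (fun _ _ _ => Subtype.ext (add_tmul _ _ _))
    (fun _ _ _ => Subtype.ext (smul_tmul' _ _ _).symm)
    (fun _ _ _ => Subtype.ext (tmul_add _ _ _))
    (fun _ _ _ => Subtype.ext (tmul_smul _ _ _))

theorem sublevelTmul_apply {i j : ℝ} (hij : i + j = m) (a : sublevel K v i) (b : sublevel K w j) :
    (sublevelTmul hv hw hij a b : V ⊗[K] W) = (a : V) ⊗ₜ[K] (b : W) :=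
  rfl

noncomputable def gradedTmul {i j : ℝ} (hij : i + j = m) :
    gradedPiece K v i →ₗ[K] gradedPiece K w j →ₗ[K] tensorGradedPiece K v w m :=
  LinearMap.liftQ₂ _ _ ((sublevelTmul hv hw hij).compr₂ (Submodule.mkQ _))
    (fun a ha => LinearMap.ext fun b => (Submodule.Quotient.mk_eq_zero _).mpr <|
      tmul_mem_tensorStrictSublevel <| by
        rw [← hij, WithBot.coe_add]
        exact WithBot.add_lt_coe_add_coe_of_lt_of_le (hv.mem_strictSublevel.mp ha)
          (hw.mem_sublevel.mp b.2))
    (fun b hb => LinearMap.ext fun a => (Submodule.Quotient.mk_eq_zero _).mpr <|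
      tmul_mem_tensorStrictSublevel <| by
        rw [add_comm, ← hij, WithBot.coe_add, add_comm (i : WithBot ℝ)]
        exact WithBot.add_lt_coe_add_coe_of_lt_of_le (hw.mem_strictSublevel.mp hb)
          (hv.mem_sublevel.mp a.2))

variable (m) in
noncomputable def gradedTensorMap : gradedTensor K v w m →ₗ[K] tensorGradedPiece K v w m :=
  DirectSum.toModule K _ _ fun p => TensorProduct.lift (gradedTmul hv hw p.2)

theorem gradedTensorMap_lof_mk_tmul_mk (p : {p : ℝ × ℝ // p.1 + p.2 = m})
    (a : sublevel K v p.1.1) (b : sublevel K w p.1.2) :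
    gradedTensorMap hv hw m
        (DirectSum.lof K _ _ p (Submodule.Quotient.mk a ⊗ₜ Submodule.Quotient.mk b)) =
      Submodule.Quotient.mk (sublevelTmul hv hw p.2 a b) := by
  rw [gradedTensorMap, DirectSum.toModule_lof, lift.tmul]
  rfl

theorem gradedTensorMap_surjective : Function.Surjective (gradedTensorMap hv hw m) := by
  have hspan : Submodule.span K (Subtype.val ⁻¹' {x | ∃ (a : V) (b : W),
      v a + w b ≤ (m : WithBot ℝ) ∧ x = a ⊗ₜ[K] b}) =
      (⊤ : Submodule K (tensorSublevel K v w m)) :=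
    Submodule.span_span_coe_preimage
  rw [← LinearMap.range_eq_top, eq_top_iff, ← Submodule.range_mkQ, ← Submodule.map_top,
    ← hspan, Submodule.map_span_le]
  rintro ⟨_, hx⟩ ⟨a, b, hab, rfl⟩
  rcases hab.lt_or_eq with hlt | heq
  · refine ⟨0, ?_⟩
    rw [map_zero, Submodule.mkQ_apply, eq_comm, Submodule.Quotient.mk_eq_zero]
    exact tmul_mem_tensorStrictSublevel hlt
  · obtain ⟨i, j, hi, hj, hij⟩ := WithBot.add_eq_coe.mp heq
    exact ⟨_, gradedTensorMap_lof_mk_tmul_mk hv hw ⟨(i, j), hij⟩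
      ⟨a, hv.mem_sublevel.mpr hi.ge⟩ ⟨b, hw.mem_sublevel.mpr hj.ge⟩⟩

theorem IsDegreeFunction.exists_dual_extend_gradedPiece {v : V → WithBot ℝ}
    (hv : IsDegreeFunction K v) {i : ℝ} (f : Dual K (gradedPiece K v i)) :
    ∃ g : Dual K V, (∀ a : sublevel K v i, g a = f (Submodule.Quotient.mk a)) ∧
      ∀ a, v a < i → g a = 0 := by
  obtain ⟨g, hg⟩ := LinearMap.exists_extend (f ∘ₗ Submodule.mkQ _)
  refine ⟨g, fun a => LinearMap.congr_fun hg a, fun a ha => ?_⟩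
  have ha' : a ∈ sublevel K v i := hv.mem_sublevel.mpr ha.le
  have hstrict : (⟨a, ha'⟩ : sublevel K v i) ∈
      (strictSublevel K v i).comap (sublevel K v i).subtype :=
    hv.mem_strictSublevel.mpr ha
  calc g a = f (Submodule.Quotient.mk ⟨a, ha'⟩) := LinearMap.congr_fun hg ⟨a, ha'⟩
    _ = 0 := by rw [(Submodule.Quotient.mk_eq_zero _).mpr hstrict, map_zero]

theorem exists_dual_comp_gradedTensorMap (p : {p : ℝ × ℝ // p.1 + p.2 = m})
    (f : Dual K (gradedPiece K v p.1.1)) (g : Dual K (gradedPiece K w p.1.2)) :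
    ∃ Ψ : Dual K (tensorGradedPiece K v w m), Ψ ∘ₗ gradedTensorMap hv hw m =
      dualDistrib K _ _ (f ⊗ₜ g) ∘ₗ DirectSum.component K _ _ p := by
  obtain ⟨f', hf', hf'_zero⟩ := hv.exists_dual_extend_gradedPiece f
  obtain ⟨g', hg', hg'_zero⟩ := hw.exists_dual_extend_gradedPiece g
  have hvanish : ∀ a b, v a < p.1.1 ∨ w b < p.1.2 → f' a * g' b = 0 := by
    rintro a b (ha | hb)
    · rw [hf'_zero a ha, zero_mul]
    · rw [hg'_zero b hb, mul_zero]
  let Φ := dualDistrib K V W (f' ⊗ₜ g') ∘ₗ (tensorSublevel K v w m).subtype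
  have hker : (tensorStrictSublevel K v w m).comap (tensorSublevel K v w m).subtype ≤
      LinearMap.ker Φ := fun z hz =>
    tensorStrictSublevel_le_ker _ (fun a b h => (dualDistrib_apply _ _ _ _).trans <| hvanish a b <|
      lt_or_lt_of_add_lt_add <| by rwa [← WithBot.coe_add, p.2]) hz
  refine ⟨Submodule.liftQ _ Φ hker, DirectSum.linearMap_ext K fun q => TensorProduct.ext' ?_⟩
  intro x y
  induction x using Submodule.Quotient.induction_on with | H a => ?_
  induction y using Submodule.Quotient.induction_on with | H b => ?_
  simp only [LinearMap.comp_apply, gradedTensorMap_lof_mk_tmul_mk, Submodule.liftQ_apply,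
    Φ, Submodule.subtype_apply, sublevelTmul_apply, dualDistrib_apply]
  by_cases hq : q = p
  · subst hq
    rw [DirectSum.component.lof_self, dualDistrib_apply, hf', hg']
  · rw [DirectSum.component.of, dif_neg hq, map_zero]
    refine hvanish a b ((Prod.fst_lt_or_snd_lt_of_add_eq_add (by rw [q.2, p.2])
      (Subtype.coe_injective.ne hq)).imp (fun h => ?_) (fun h => ?_))
    · exact (hv.mem_sublevel.mp a.2).trans_lt (WithBot.coe_lt_coe.mpr h)
    · exact (hw.mem_sublevel.mp b.2).trans_lt (WithBot.coe_lt_coe.mpr h)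

theorem gradedTensorMap_injective : Function.Injective (gradedTensorMap hv hw m) := by
  intro x y hxy
  ext p
  rw [← sub_eq_zero]
  refine eq_zero_of_forall_dualDistrib_eq_zero fun f g => ?_
  obtain ⟨Ψ, hΨ⟩ := exists_dual_comp_gradedTensorMap hv hw p f g
  rw [map_sub, sub_eq_zero]
  calc _ = Ψ (gradedTensorMap hv hw m x) := (LinearMap.congr_fun hΨ x).symm
    _ = Ψ (gradedTensorMap hv hw m y) := by rw [hxy]
    _ = _ := LinearMap.congr_fun hΨ y

variable (m) in
noncomputable def gradedTensorEquiv : gradedTensor K v w m ≃ₗ[K] tensorGradedPiece K v w m :=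
  LinearEquiv.ofBijective (gradedTensorMap hv hw m)
    ⟨gradedTensorMap_injective hv hw, gradedTensorMap_surjective hv hw⟩

end tensor

end DegreeFiltration

open DegreeFiltration in
theorem associated_graded_of_sum_filtration_general
    {A B : Type} [CommRing A] [CommRing B]
    [Algebra ℂ A] [Algebra ℂ B]
    (v : A → WithBot ℝ) (w : B → WithBot ℝ)
    (hv1 : ∀ a b : A, v (a * b) = v a + v b)
    (hv2 : ∀ a b : A, v (a + b) ≤ max (v a) (v b))
    (hv3 : ∀ c : ℂ, c ≠ 0 → v (algebraMap ℂ A c) = 0)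
    (hv4 : v 0 = ⊥)
    (hw1 : ∀ a b : B, w (a * b) = w a + w b)
    (hw2 : ∀ a b : B, w (a + b) ≤ max (w a) (w b))
    (hw3 : ∀ c : ℂ, c ≠ 0 → w (algebraMap ℂ B c) = 0)
    (hw4 : w 0 = ⊥)
    (m : ℝ) :
    let Fle : ℝ → Submodule ℂ (A ⊗[ℂ] B) := fun r =>
      Submodule.span ℂ {x | ∃ (a : A) (b : B), v a + w b ≤ (r : WithBot ℝ) ∧ x = a ⊗ₜ[ℂ] b}
    let Flt : Submodule ℂ (A ⊗[ℂ] B) := ⨆ (r : ℝ) (_ : r < m), Fle r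
    let Vle : ℝ → Submodule ℂ A := fun i => Submodule.span ℂ {a | v a ≤ (i : WithBot ℝ)}
    let Vlt : ℝ → Submodule ℂ A := fun i => Submodule.span ℂ {a | v a < (i : WithBot ℝ)}
    let Wle : ℝ → Submodule ℂ B := fun j => Submodule.span ℂ {b | w b ≤ (j : WithBot ℝ)}
    let Wlt : ℝ → Submodule ℂ B := fun j => Submodule.span ℂ {b | w b < (j : WithBot ℝ)}
    Nonempty
      ((↥(Fle m) ⧸ (Flt.comap (Fle m).subtype)) ≃ₗ[ℂ]
        (DirectSum {p : ℝ × ℝ // p.1 + p.2 = m} fun p =>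
          (↥(Vle p.1.1) ⧸ ((Vlt p.1.1).comap (Vle p.1.1).subtype)) ⊗[ℂ]
            (↥(Wle p.1.2) ⧸ ((Wlt p.1.2).comap (Wle p.1.2).subtype)))) :=
  ⟨(gradedTensorEquiv (IsDegreeFunction.of_valuation hv1 hv2 hv3 hv4)
    (IsDegreeFunction.of_valuation hw1 hw2 hw3 hw4) m).symm⟩

/-- Let A, B be commutative ℂ-algebra domains with valuations v, w lifting the
trivial valuation on ℂ.  For m ∈ ℝ let F≤m ⊆ A ⊗ B be the subspace spanned by pure
tensors a ⊗ b with v(a) + w(b) ≤ m, F<m the union of the F≤m' over m' < m, and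
v≤i, v<i, w≤j, w<j the corresponding subspaces of A and B.  Then
F≤m / F<m ≅ ⊕_{i+j=m} (v≤i/v<i) ⊗ (w≤j/w<j) as ℂ-vector spaces. -/
theorem associated_graded_of_sum_filtration
    {A B : Type} [CommRing A] [CommRing B] [IsDomain A] [IsDomain B]
    [Algebra ℂ A] [Algebra ℂ B]
    (v : A → WithBot ℝ) (w : B → WithBot ℝ)
    (hv1 : ∀ a b : A, v (a * b) = v a + v b)
    (hv2 : ∀ a b : A, v (a + b) ≤ max (v a) (v b))
    (hv3 : ∀ c : ℂ, c ≠ 0 → v (algebraMap ℂ A c) = 0)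
    (hv4 : v 0 = ⊥)
    (hw1 : ∀ a b : B, w (a * b) = w a + w b)
    (hw2 : ∀ a b : B, w (a + b) ≤ max (w a) (w b))
    (hw3 : ∀ c : ℂ, c ≠ 0 → w (algebraMap ℂ B c) = 0)
    (hw4 : w 0 = ⊥)
    (m : ℝ) :
    let Fle : ℝ → Submodule ℂ (A ⊗[ℂ] B) := fun r =>
      Submodule.span ℂ {x | ∃ (a : A) (b : B), v a + w b ≤ (r : WithBot ℝ) ∧ x = a ⊗ₜ[ℂ] b}
    let Flt : Submodule ℂ (A ⊗[ℂ] B) := ⨆ (r : ℝ) (_ : r < m), Fle r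
    let Vle : ℝ → Submodule ℂ A := fun i => Submodule.span ℂ {a | v a ≤ (i : WithBot ℝ)}
    let Vlt : ℝ → Submodule ℂ A := fun i => Submodule.span ℂ {a | v a < (i : WithBot ℝ)}
    let Wle : ℝ → Submodule ℂ B := fun j => Submodule.span ℂ {b | w b ≤ (j : WithBot ℝ)}
    let Wlt : ℝ → Submodule ℂ B := fun j => Submodule.span ℂ {b | w b < (j : WithBot ℝ)}
    Nonempty
      ((↥(Fle m) ⧸ (Flt.comap (Fle m).subtype)) ≃ₗ[ℂ]
        (DirectSum {p : ℝ × ℝ // p.1 + p.2 = m} fun p =>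
          (↥(Vle p.1.1) ⧸ ((Vlt p.1.1).comap (Vle p.1.1).subtype)) ⊗[ℂ]
            (↥(Wle p.1.2) ⧸ ((Wlt p.1.2).comap (Wle p.1.2).subtype)))) :=
  associated_graded_of_sum_filtration_general v w hv1 hv2 hv3 hv4 hw1 hw2 hw3 hw4 m
end

section
/- Fix n ≥ 1. Let Bₙ := ℂ[x_{i,r,c} : 1 ≤ i ≤ n, r,c ∈ {1,2}] / (x_{i,1,1}x_{i,2,2} - x_{i,1,2}x_{i,2,1} - 1 for each i) be the coordinate ring of SL₂(ℂ)ⁿ, where x_{i,r,c} is the (r,c) entry function of the i-th matrix. For g ∈ SL₂(ℂ) let σ_g be the ℂ-algebra automorphism of Bₙ with σ_g(x_{i,r,c}) = g_{r,1}·x_{i,1,c} + g_{r,2}·x_{i,2,c} (the action induced by simultaneous left multiplication of all n matrices by g). Order the 2n column indices (i,a) (1 ≤ i ≤ n, a ∈ {1,2}) lexicographically and for (i,a) < (j,b) set p_{(i,a),(j,b)} := x_{i,1,a}x_{j,2,b} - x_{i,2,a}x_{j,1,b} ∈ Bₙ (the determinant of column a of the i-th matrix and column b of the j-th matrix). Then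 the fixed subalgebra {f ∈ Bₙ : σ_g(f) = f for all g ∈ SL₂(ℂ)} is generated as a ℂ-algebra by the p_{(i,a),(j,b)}, and the kernel of the ℂ-algebra map from the polynomial ring on variables P_{(i,a),(j,b)} ((i,a) < (j,b)) to Bₙ sending P_{(i,a),(j,b)} ↦ p_{(i,a),(j,b)} is generated by the Plücker relations P_{(i,a),(j,b)}P_{(k,c),(l,d)} + P_{(i,a),(l,d)}P_{(j,b),(k,c)} - P_{(i,a),(k,c)}P_{(j,b),(l,d)} for (i,a) < (j,b) < (k,c) < (l,d), together with the relations P_{(i,1),(i,2)} - 1 for each i. -/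
open MvPolynomial

/-- Index type for the matrix entries x_{i,r,c} of n matrices: (i, r, c) with
rows/columns r, c ∈ Fin 2 (0 = first row/column, 1 = second). -/
abbrev Ent (n : ℕ) := Fin n × Fin 2 × Fin 2

/-- The determinant relation x_{i,1,1}x_{i,2,2} - x_{i,1,2}x_{i,2,1} - 1 of the
i-th matrix. -/
noncomputable def reln (n : ℕ) (i : Fin n) : MvPolynomial (Ent n) ℂ :=
  X (i, 0, 0) * X (i, 1, 1) - X (i, 0, 1) * X (i, 1, 0) - 1

/-- The ideal of determinant relations. -/
noncomputable def In (n : ℕ) : Ideal (MvPolynomial (Ent n) ℂ) :=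
  Ideal.span (Set.range (reln n))

/-- Bₙ = ℂ[SL₂(ℂ)ⁿ], the coordinate ring of n copies of SL₂(ℂ). -/
abbrev Bn (n : ℕ) := MvPolynomial (Ent n) ℂ ⧸ In n

/-- The (r,c) matrix entry function of the i-th matrix, as an element of Bₙ. -/
noncomputable def xq (n : ℕ) (i : Fin n) (r c : Fin 2) : Bn n :=
  Ideal.Quotient.mk (In n) (X (i, r, c))

/-- The action σ_g of g ∈ SL₂(ℂ) on Bₙ induced by simultaneous left multiplication
of all n matrices by g: σ_g(x_{i,r,c}) = g_{r,1}·x_{i,1,c} + g_{r,2}·x_{i,2,c}. -/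
noncomputable def act (n : ℕ) (g : Matrix.SpecialLinearGroup (Fin 2) ℂ) :
    Bn n →ₐ[ℂ] Bn n :=
  Ideal.Quotient.liftₐ (In n)
    (MvPolynomial.aeval fun p : Ent n =>
      algebraMap ℂ (Bn n) ((g : Matrix (Fin 2) (Fin 2) ℂ) p.2.1 0) * xq n p.1 0 p.2.2
        + algebraMap ℂ (Bn n) ((g : Matrix (Fin 2) (Fin 2) ℂ) p.2.1 1) * xq n p.1 1 p.2.2)
    (by
      intro a ha
      have hle : In n ≤ RingHom.ker (MvPolynomial.aeval (R := ℂ) fun p : Ent n =>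
          algebraMap ℂ (Bn n) ((g : Matrix (Fin 2) (Fin 2) ℂ) p.2.1 0) * xq n p.1 0 p.2.2
            + algebraMap ℂ (Bn n) ((g : Matrix (Fin 2) (Fin 2) ℂ) p.2.1 1)
              * xq n p.1 1 p.2.2) := by
        show Ideal.span (Set.range (reln n)) ≤ _
        rw [Ideal.span_le]
        rintro _ ⟨i, rfl⟩
        simp only [SetLike.mem_coe, RingHom.mem_ker]
        have hdet : (g : Matrix (Fin 2) (Fin 2) ℂ) 0 0 * (g : Matrix (Fin 2) (Fin 2) ℂ) 1 1
            - (g : Matrix (Fin 2) (Fin 2) ℂ) 0 1 * (g : Matrix (Fin 2) (Fin 2) ℂ) 1 0 = 1 := by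
          have hd := g.2
          rwa [Matrix.det_fin_two] at hd
        have hdet' : algebraMap ℂ (Bn n) ((g : Matrix (Fin 2) (Fin 2) ℂ) 0 0)
              * algebraMap ℂ (Bn n) ((g : Matrix (Fin 2) (Fin 2) ℂ) 1 1)
            - algebraMap ℂ (Bn n) ((g : Matrix (Fin 2) (Fin 2) ℂ) 0 1)
              * algebraMap ℂ (Bn n) ((g : Matrix (Fin 2) (Fin 2) ℂ) 1 0) = 1 := by
          rw [← map_mul, ← map_mul, ← map_sub, hdet, map_one]
        have hrel : xq n i 0 0 * xq n i 1 1 - xq n i 0 1 * xq n i 1 0 - 1 = 0 := by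
          have hm : Ideal.Quotient.mk (In n) (reln n i) = 0 :=
            Ideal.Quotient.eq_zero_iff_mem.mpr (Ideal.subset_span ⟨i, rfl⟩)
          simpa [reln, xq, map_sub, map_mul, map_one] using hm
        simp only [reln, map_sub, map_mul, map_one, MvPolynomial.aeval_X]
        linear_combination
          (xq n i 0 0 * xq n i 1 1 - xq n i 0 1 * xq n i 1 0) * hdet' + hrel
      exact hle ha)

/-- The lexicographic position of a column index (i, a): the columns of the i-th
matrix sit at positions 2i and 2i+1. -/
def colIdx (n : ℕ) (p : Fin n × Fin 2) : ℕ := 2 * p.1.val + p.2.val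

/-- Pairs of column indices (i,a) < (j,b) in the lexicographic order. -/
abbrev ColPair (n : ℕ) := {pr : (Fin n × Fin 2) × (Fin n × Fin 2) //
  colIdx n pr.1 < colIdx n pr.2}

/-- The Plücker invariant p_{(i,a),(j,b)} = x_{i,1,a}x_{j,2,b} - x_{i,2,a}x_{j,1,b},
the determinant of column a of the i-th matrix and column b of the j-th matrix. -/
noncomputable def pluck (n : ℕ) (p q : Fin n × Fin 2) : Bn n :=
  xq n p.1 0 p.2 * xq n q.1 1 q.2 - xq n p.1 1 p.2 * xq n q.1 0 q.2

/-- The Plücker relations P_{(i,a),(j,b)}P_{(k,c),(l,d)} +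
P_{(i,a),(l,d)}P_{(j,b),(k,c)} - P_{(i,a),(k,c)}P_{(j,b),(l,d)} for
(i,a) < (j,b) < (k,c) < (l,d). -/
def plueckerRels (n : ℕ) : Set (MvPolynomial (ColPair n) ℂ) :=
  {r | ∃ (c1 c2 c3 c4 : Fin n × Fin 2) (h12 : colIdx n c1 < colIdx n c2)
        (h23 : colIdx n c2 < colIdx n c3) (h34 : colIdx n c3 < colIdx n c4),
      r = X (⟨(c1, c2), h12⟩ : ColPair n) * X (⟨(c3, c4), h34⟩ : ColPair n)
          + X (⟨(c1, c4), Nat.lt_trans h12 (Nat.lt_trans h23 h34)⟩ : ColPair n)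
              * X (⟨(c2, c3), h23⟩ : ColPair n)
          - X (⟨(c1, c3), Nat.lt_trans h12 h23⟩ : ColPair n)
              * X (⟨(c2, c4), Nat.lt_trans h23 h34⟩ : ColPair n)}

/-- The relations P_{(i,1),(i,2)} - 1 for each i. -/
def unitRels (n : ℕ) : Set (MvPolynomial (ColPair n) ℂ) :=
  {r | ∃ i : Fin n,
      r = X (⟨((i, 0), (i, 1)), by simp only [colIdx, Fin.val_zero, Fin.val_one]; omega⟩ :
          ColPair n) - 1}


/-!
An invariant `f` is fixed by the substitution `C_i ↦ C_0⁻¹ C_i`, and the entries of `C_0⁻¹ C_i`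
are `-p_{(0,1),(i,c)}` and `p_{(0,0),(i,c)}`; so `f` is a polynomial in the Plücker invariants.
As `C_0⁻¹` is a point of `SL₂` over `Bₙ` rather than over `ℂ`, invariance must first be extended
from complex points to points over any `ℂ`-algebra. For a unipotent matrix with entry `u` this
is a polynomial identity in `u` that holds for all `u ∈ ℂ`, hence identically; a matrix with a
unit entry is a product of unipotent and constant ones; and the first-row entries `a, b` of
`C_0`, which generate the unit ideal, become units once inverted.

Read in `ℂ[P] / J`, the same substitution is a retraction of `ℂ[P] / J → Bₙ`: modulo the Plücker
relation for `(0,0) < (0,1) < u < v` and `P_{(0,0),(0,1)} = 1`, every `P_{u,v}` equals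
`P_{(0,0),u} P_{(0,1),v} - P_{(0,0),v} P_{(0,1),u}`, which is what the substitution produces.
-/

open Matrix

section CoordinateRing

variable {n : ℕ} {R S : Type*} [CommRing R] [Algebra ℂ R] [CommRing S] [Algebra ℂ S]

theorem xq_det (i : Fin n) : xq n i 0 0 * xq n i 1 1 - xq n i 0 1 * xq n i 1 0 = 1 := by
  have h : Ideal.Quotient.mk (In n) (reln n i) = 0 :=
    Ideal.Quotient.eq_zero_iff_mem.mpr (Ideal.subset_span ⟨i, rfl⟩)
  simpa [reln, xq, sub_eq_zero] using h

variable (n) in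
noncomputable def entryMatrix (i : Fin n) : SpecialLinearGroup (Fin 2) (Bn n) :=
  ⟨Matrix.of (xq n i), by rw [det_fin_two]; exact xq_det i⟩

@[simp]
theorem entryMatrix_apply (i : Fin n) (r c : Fin 2) : entryMatrix n i r c = xq n i r c :=
  rfl

theorem algHom_ext_xq {f g : Bn n →ₐ[ℂ] R}
    (h : ∀ i r c, f (xq n i r c) = g (xq n i r c)) : f = g :=
  Ideal.Quotient.algHom_ext ℂ <| MvPolynomial.algHom_ext fun p => h p.1 p.2.1 p.2.2

noncomputable def liftSL (C : Fin n → SpecialLinearGroup (Fin 2) R) : Bn n →ₐ[ℂ] R :=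
  Ideal.Quotient.liftₐ (In n) (aeval fun p => C p.1 p.2.1 p.2.2) fun a ha => by
    refine (Ideal.span_le (I := RingHom.ker (aeval fun p : Ent n => C p.1 p.2.1 p.2.2))).mpr
      ?_ ha
    rintro _ ⟨i, rfl⟩
    simp [reln, ← det_fin_two]

@[simp]
theorem liftSL_xq (C : Fin n → SpecialLinearGroup (Fin 2) R) (i : Fin n) (r c : Fin 2) :
    liftSL C (xq n i r c) = C i r c := by
  simp only [liftSL, xq]
  exact (Ideal.Quotient.lift_mk _ _ _).trans (aeval_X _ _)

/-- Points of `SL₂ⁿ` over `R` are algebra maps `Bₙ → R`; this is the point `ψ` multiplied on the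
left by `M`. -/
noncomputable def leftTranslate (ψ : Bn n →ₐ[ℂ] R) (M : SpecialLinearGroup (Fin 2) R) :
    Bn n →ₐ[ℂ] R :=
  liftSL fun i => M * SpecialLinearGroup.map (ψ : Bn n →+* R) (entryMatrix n i)

theorem leftTranslate_xq (ψ : Bn n →ₐ[ℂ] R) (M : SpecialLinearGroup (Fin 2) R) (i : Fin n)
    (r c : Fin 2) :
    leftTranslate ψ M (xq n i r c) = M r 0 * ψ (xq n i 0 c) + M r 1 * ψ (xq n i 1 c) := by
  simp [leftTranslate, mul_apply, Fin.sum_univ_two]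

theorem leftTranslate_leftTranslate (ψ : Bn n →ₐ[ℂ] R) (M N : SpecialLinearGroup (Fin 2) R) :
    leftTranslate (leftTranslate ψ M) N = leftTranslate ψ (N * M) :=
  algHom_ext_xq fun i r c => by
    simp only [leftTranslate_xq, Fin.isValue, Matrix.SpecialLinearGroup.coe_mul, mul_apply,
      Fin.sum_univ_two]
    ring

theorem comp_leftTranslate (χ : R →ₐ[ℂ] S) (ψ : Bn n →ₐ[ℂ] R)
    (M : SpecialLinearGroup (Fin 2) R) :
    χ.comp (leftTranslate ψ M) =
      leftTranslate (χ.comp ψ) (SpecialLinearGroup.map (χ : R →+* S) M) :=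
  algHom_ext_xq fun i r c => by simp [leftTranslate_xq]

theorem act_xq (g : SpecialLinearGroup (Fin 2) ℂ) (i : Fin n) (r c : Fin 2) :
    act n g (xq n i r c) = algebraMap ℂ (Bn n) (g r 0) * xq n i 0 c
      + algebraMap ℂ (Bn n) (g r 1) * xq n i 1 c := by
  simp only [act, xq, Ideal.Quotient.liftₐ_apply]
  exact (Ideal.Quotient.lift_mk _ _ _).trans (by simp)

theorem act_eq_leftTranslate (g : SpecialLinearGroup (Fin 2) ℂ) :
    act n g =
      leftTranslate (AlgHom.id ℂ (Bn n)) (SpecialLinearGroup.map (algebraMap ℂ (Bn n)) g) :=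
  algHom_ext_xq fun i r c => by simp [leftTranslate_xq, act_xq]

theorem leftTranslate_map_algebraMap (ψ : Bn n →ₐ[ℂ] R) (g : SpecialLinearGroup (Fin 2) ℂ) :
    leftTranslate ψ (SpecialLinearGroup.map (algebraMap ℂ R) g) = ψ.comp (act n g) := by
  rw [act_eq_leftTranslate, comp_leftTranslate]
  congr 1
  ext r c
  simp

end CoordinateRing

open Polynomial in
theorem Polynomial.eq_zero_of_forall_eval_algebraMap_eq_zero {K A : Type*} [Field K]
    [Infinite K] [CommRing A] [Algebra K A] {q : A[X]}
    (h : ∀ t : K, q.eval (algebraMap K A t) = 0) : q = 0 := by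
  ext k
  rw [coeff_zero, ← Module.forall_dual_apply_eq_zero_iff K]
  intro φ
  -- `φ` applied to the coefficients of `q` is a polynomial over `K` vanishing on all of `K`
  have hφ : (∑ j ∈ q.support, monomial j (φ (q.coeff j)) : K[X]) = 0 :=
    Polynomial.funext fun t => by
      rw [eval_zero, ← map_zero φ, ← h t, eval_finsetSum, eval_eq_sum, sum_def, map_sum]
      refine Finset.sum_congr rfl fun j _ => ?_
      rw [eval_monomial, ← map_pow, ← Algebra.commutes, ← Algebra.smul_def, map_smul,
        smul_eq_mul, mul_comm]
  have hk := congrArg (coeff · k) hφ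
  by_cases hq : q.coeff k = 0
  · simp [hq]
  · simpa [finsetSum_coeff, coeff_monomial, hq] using hk

section Unipotent

variable {R S : Type*} [CommRing R] [CommRing S]

def upperUnipotent (u : R) : SpecialLinearGroup (Fin 2) R :=
  ⟨!![1, u; 0, 1], by simp [det_fin_two_of]⟩

def lowerUnipotent (u : R) : SpecialLinearGroup (Fin 2) R :=
  ⟨!![1, 0; u, 1], by simp [det_fin_two_of]⟩

@[simp]
theorem coe_upperUnipotent (u : R) :
    (upperUnipotent u : Matrix (Fin 2) (Fin 2) R) = !![1, u; 0, 1] :=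
  rfl

@[simp]
theorem coe_lowerUnipotent (u : R) :
    (lowerUnipotent u : Matrix (Fin 2) (Fin 2) R) = !![1, 0; u, 1] :=
  rfl

theorem map_upperUnipotent (f : R →+* S) (u : R) :
    SpecialLinearGroup.map f (upperUnipotent u) = upperUnipotent (f u) := by
  ext i j; fin_cases i <;> fin_cases j <;> simp

theorem map_lowerUnipotent (f : R →+* S) (u : R) :
    SpecialLinearGroup.map f (lowerUnipotent u) = lowerUnipotent (f u) := by
  ext i j; fin_cases i <;> fin_cases j <;> simp

theorem eq_lowerUnipotent_mul_upperUnipotent_mul_lowerUnipotent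
    (M : SpecialLinearGroup (Fin 2) R) {v : R} (hv : M 0 1 * v = 1) :
    M = lowerUnipotent ((M 1 1 - 1) * v) * upperUnipotent (M 0 1) *
      lowerUnipotent ((M 0 0 - 1) * v) := by
  have hdet : M 0 0 * M 1 1 - M 0 1 * M 1 0 = 1 := by rw [← det_fin_two]; exact M.2
  ext i j
  fin_cases i <;> fin_cases j <;>
    simp only [Fin.zero_eta, Fin.mk_one, Fin.isValue, Matrix.SpecialLinearGroup.coe_mul,
      coe_lowerUnipotent, coe_upperUnipotent, mul_apply, Fin.sum_univ_two, of_apply, cons_val',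
      cons_val_zero, cons_val_one, cons_val_fin_one]
  · linear_combination (1 - M 0 0) * hv
  · ring
  · linear_combination (-M 1 0 - (M 1 1 - 1) * (M 0 0 - 1) * v) * hv - v * hdet
  · linear_combination (1 - M 1 1) * hv

end Unipotent

section TranslateInvariance

open scoped Polynomial

variable {n : ℕ} {R : Type*} [CommRing R] [Algebra ℂ R]

def IsLeftTranslateInvariant (f : Bn n) (M : SpecialLinearGroup (Fin 2) R) : Prop :=
  ∀ ψ : Bn n →ₐ[ℂ] R, leftTranslate ψ M f = ψ f

theorem IsLeftTranslateInvariant.mul {f : Bn n} {A B : SpecialLinearGroup (Fin 2) R}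
    (hA : IsLeftTranslateInvariant f A) (hB : IsLeftTranslateInvariant f B) :
    IsLeftTranslateInvariant f (A * B) := fun ψ => by
  rw [← leftTranslate_leftTranslate, hA, hB]

theorem aevalTower_comp_leftTranslate (ψ : Bn n →ₐ[ℂ] R) (u : R)
    (N : SpecialLinearGroup (Fin 2) ℂ[X]) :
    (Polynomial.aevalTower ψ u).comp (leftTranslate (R := (Bn n)[X]) Polynomial.CAlgHom
        (SpecialLinearGroup.map (Polynomial.mapAlg ℂ (Bn n) : ℂ[X] →+* (Bn n)[X]) N))
      = leftTranslate ψ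
          (SpecialLinearGroup.map (Polynomial.aeval (R := ℂ) u : ℂ[X] →+* R) N) := by
  have hC : (Polynomial.aevalTower ψ u).comp Polynomial.CAlgHom = ψ :=
    AlgHom.ext fun b => by simp
  have hX : (Polynomial.aevalTower ψ u).comp (Polynomial.mapAlg ℂ (Bn n)) = Polynomial.aeval u :=
    Polynomial.algHom_ext (by simp [Polynomial.mapAlg])
  refine (comp_leftTranslate (R := (Bn n)[X]) (Polynomial.aevalTower ψ u)
    Polynomial.CAlgHom _).trans ?_
  rw [hC]
  congr 1
  ext i j
  simp [← hX]

variable {f : Bn n} (hf : ∀ g : SpecialLinearGroup (Fin 2) ℂ, act n g f = f)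
include hf

theorem isLeftTranslateInvariant_map_algebraMap (g : SpecialLinearGroup (Fin 2) ℂ) :
    IsLeftTranslateInvariant f (SpecialLinearGroup.map (algebraMap ℂ R) g) := fun ψ => by
  rw [leftTranslate_map_algebraMap, AlgHom.comp_apply, hf]

theorem leftTranslate_CAlgHom_map_mapAlg (N : SpecialLinearGroup (Fin 2) ℂ[X]) :
    leftTranslate (R := (Bn n)[X]) Polynomial.CAlgHom
        (SpecialLinearGroup.map (Polynomial.mapAlg ℂ (Bn n) : ℂ[X] →+* (Bn n)[X]) N) f
      = Polynomial.C f := by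
  refine sub_eq_zero.mp <|
    Polynomial.eq_zero_of_forall_eval_algebraMap_eq_zero (K := ℂ) fun t => ?_
  have hmap : SpecialLinearGroup.map (Polynomial.aeval (R := ℂ) (algebraMap ℂ (Bn n) t) :
        ℂ[X] →+* Bn n) N
      = SpecialLinearGroup.map (algebraMap ℂ (Bn n))
          (SpecialLinearGroup.map (Polynomial.aeval (R := ℂ) t : ℂ[X] →+* ℂ) N) := by
    ext i j
    simp [Polynomial.aeval_algebraMap_apply]
  -- at `X = t` the generic translate is `act n (N t) f = f`
  have := congrArg (· f) (aevalTower_comp_leftTranslate (AlgHom.id ℂ (Bn n))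
    (algebraMap ℂ (Bn n) t) N)
  rw [hmap, leftTranslate_map_algebraMap, AlgHom.id_comp, AlgHom.comp_apply, hf] at this
  rw [Polynomial.eval_sub, Polynomial.eval_C, sub_eq_zero]
  exact this

theorem isLeftTranslateInvariant_map_aeval (N : SpecialLinearGroup (Fin 2) ℂ[X]) (u : R) :
    IsLeftTranslateInvariant f
      (SpecialLinearGroup.map (Polynomial.aeval (R := ℂ) u : ℂ[X] →+* R) N) := fun ψ => by
  rw [← aevalTower_comp_leftTranslate, AlgHom.comp_apply, leftTranslate_CAlgHom_map_mapAlg hf,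
    Polynomial.aevalTower_C]

theorem isLeftTranslateInvariant_upperUnipotent (u : R) :
    IsLeftTranslateInvariant f (upperUnipotent u) := by
  simpa [map_upperUnipotent] using
    isLeftTranslateInvariant_map_aeval hf (upperUnipotent Polynomial.X) u

theorem isLeftTranslateInvariant_lowerUnipotent (u : R) :
    IsLeftTranslateInvariant f (lowerUnipotent u) := by
  simpa [map_lowerUnipotent] using
    isLeftTranslateInvariant_map_aeval hf (lowerUnipotent Polynomial.X) u

theorem isLeftTranslateInvariant_of_isUnit_apply_zero_one {M : SpecialLinearGroup (Fin 2) R}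
    (hM : IsUnit (M 0 1)) : IsLeftTranslateInvariant f M := by
  obtain ⟨v, hv⟩ := hM.exists_right_inv
  rw [eq_lowerUnipotent_mul_upperUnipotent_mul_lowerUnipotent M hv]
  exact ((isLeftTranslateInvariant_lowerUnipotent hf _).mul
    (isLeftTranslateInvariant_upperUnipotent hf _)).mul
      (isLeftTranslateInvariant_lowerUnipotent hf _)

theorem isLeftTranslateInvariant_of_isUnit_apply_one_one {M : SpecialLinearGroup (Fin 2) R}
    (hM : IsUnit (M 1 1)) : IsLeftTranslateInvariant f M := by
  -- `g * M` has the unit `M 1 1` in position `(0, 1)`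
  let g : SpecialLinearGroup (Fin 2) ℂ := ⟨!![0, 1; -1, 0], by simp [det_fin_two_of]⟩
  rw [← inv_mul_cancel_left (SpecialLinearGroup.map (algebraMap ℂ R) g) M, ← map_inv]
  refine (isLeftTranslateInvariant_map_algebraMap hf _).mul
    (isLeftTranslateInvariant_of_isUnit_apply_zero_one hf ?_)
  have hg : ∀ r c, SpecialLinearGroup.map (algebraMap ℂ R) g r c = algebraMap ℂ R (g r c) :=
    fun _ _ => rfl
  simpa [g, hg, mul_apply, Fin.sum_univ_two] using hM

end TranslateInvariance

section Invariants

variable {n : ℕ}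

theorem leftTranslate_inv_entryMatrix_of_invariant {f : Bn n}
    (hf : ∀ g : SpecialLinearGroup (Fin 2) ℂ, act n g f = f) (i : Fin n) :
    leftTranslate (AlgHom.id ℂ (Bn n)) (entryMatrix n i)⁻¹ f = f := by
  have hspan : Ideal.span {xq n i 0 0, xq n i 0 1} = ⊤ := by
    rw [Ideal.eq_top_iff_one, Ideal.mem_span_pair]
    exact ⟨xq n i 1 1, -xq n i 1 0, by linear_combination xq_det i⟩
  -- over `Bₙ[1/w]` the entry `w` or `-w` of `C_i⁻¹ = adj C_i` is a unit
  refine Localization.algebraMap_injective_of_span_eq_top _ hspan (funext fun ⟨w, hw⟩ => ?_)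
  let ψ := IsScalarTower.toAlgHom ℂ (Bn n) (Localization.Away w)
  have hunit : IsUnit (ψ w) := IsLocalization.Away.algebraMap_isUnit w
  change ψ (leftTranslate (AlgHom.id ℂ (Bn n)) (entryMatrix n i)⁻¹ f) = ψ f
  rw [← AlgHom.comp_apply, comp_leftTranslate, AlgHom.comp_id]
  rcases hw with rfl | rfl
  · refine isLeftTranslateInvariant_of_isUnit_apply_one_one hf ?_ ψ
    simpa [SpecialLinearGroup.coe_inv, adjugate_fin_two] using hunit
  · refine isLeftTranslateInvariant_of_isUnit_apply_zero_one hf ?_ ψ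
    simpa [SpecialLinearGroup.coe_inv, adjugate_fin_two] using hunit.neg

theorem colIdx_injective : Function.Injective (colIdx n) := by
  rintro ⟨i, a⟩ ⟨j, b⟩ h
  dsimp only [colIdx] at h
  have := a.isLt
  have := b.isLt
  exact Prod.ext (Fin.ext (show (i : ℕ) = j by omega)) (Fin.ext (show (a : ℕ) = b by omega))

theorem pluck_self (u : Fin n × Fin 2) : pluck n u u = 0 := by
  rw [pluck, mul_comm, sub_self]

theorem pluck_swap (u v : Fin n × Fin 2) : pluck n v u = -pluck n u v := by
  rw [pluck, pluck]
  ring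

theorem pluck_mem_adjoin (u v : Fin n × Fin 2) :
    pluck n u v ∈ Algebra.adjoin ℂ (Set.range fun pr : ColPair n => pluck n pr.1.1 pr.1.2) := by
  rcases lt_trichotomy (colIdx n u) (colIdx n v) with h | h | h
  · exact Algebra.subset_adjoin ⟨⟨(u, v), h⟩, rfl⟩
  · rw [colIdx_injective h, pluck_self]
    exact zero_mem _
  · rw [← neg_neg (pluck n u v), ← pluck_swap]
    exact neg_mem (Algebra.subset_adjoin ⟨⟨(v, u), h⟩, rfl⟩)

theorem adjoin_range_xq :
    Algebra.adjoin ℂ (Set.range fun p : Ent n => xq n p.1 p.2.1 p.2.2) = ⊤ := by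
  have : (Set.range fun p : Ent n => xq n p.1 p.2.1 p.2.2)
      = Ideal.Quotient.mkₐ ℂ (In n) '' Set.range X := by
    rw [← Set.range_comp]
    rfl
  rw [this, ← AlgHom.map_adjoin, adjoin_range_X, Algebra.map_top, AlgHom.range_eq_top]
  exact Ideal.Quotient.mkₐ_surjective ℂ _

theorem leftTranslate_inv_entryMatrix_mem_adjoin (i : Fin n) (f : Bn n) :
    leftTranslate (AlgHom.id ℂ (Bn n)) (entryMatrix n i)⁻¹ f
      ∈ Algebra.adjoin ℂ (Set.range fun pr : ColPair n => pluck n pr.1.1 pr.1.2) := by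
  set E := leftTranslate (AlgHom.id ℂ (Bn n)) (entryMatrix n i)⁻¹
  suffices (⊤ : Subalgebra ℂ (Bn n)).map E
      ≤ Algebra.adjoin ℂ (Set.range fun pr : ColPair n => pluck n pr.1.1 pr.1.2) from
    this ⟨f, trivial, rfl⟩
  rw [← adjoin_range_xq, AlgHom.map_adjoin, Algebra.adjoin_le_iff]
  rintro _ ⟨_, ⟨⟨j, r, c⟩, rfl⟩, rfl⟩
  fin_cases r
  · have : E (xq n j 0 c) = -pluck n (i, 1) (j, c) := by
      simp only [E, leftTranslate_xq, Matrix.SpecialLinearGroup.coe_inv, adjugate_fin_two,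
        entryMatrix_apply, of_apply, cons_val', cons_val_zero, cons_val_one, cons_val_fin_one,
        AlgHom.coe_id, id_eq, pluck]
      ring
    simpa [this] using neg_mem (pluck_mem_adjoin (i, 1) (j, c))
  · have : E (xq n j 1 c) = pluck n (i, 0) (j, c) := by
      simp only [E, leftTranslate_xq, Matrix.SpecialLinearGroup.coe_inv, adjugate_fin_two,
        entryMatrix_apply, of_apply, cons_val', cons_val_zero, cons_val_one, cons_val_fin_one,
        AlgHom.coe_id, id_eq, pluck]
      ring
    simpa [this] using pluck_mem_adjoin (i, 0) (j, c)

theorem act_pluck (g : SpecialLinearGroup (Fin 2) ℂ) (u v : Fin n × Fin 2) :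
    act n g (pluck n u v) = pluck n u v := by
  have hdet : algebraMap ℂ (Bn n) (g 0 0) * algebraMap ℂ (Bn n) (g 1 1)
      - algebraMap ℂ (Bn n) (g 0 1) * algebraMap ℂ (Bn n) (g 1 0) = 1 := by
    rw [← map_mul, ← map_mul, ← map_sub, ← det_fin_two, g.2, map_one]
  simp only [pluck, map_sub, map_mul, act_xq]
  linear_combination
    (xq n u.1 0 u.2 * xq n v.1 1 v.2 - xq n u.1 1 u.2 * xq n v.1 0 v.2) * hdet

theorem setOf_invariant_eq_adjoin_pluck [NeZero n] :
    {f : Bn n | ∀ g : SpecialLinearGroup (Fin 2) ℂ, act n g f = f}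
      = Algebra.adjoin ℂ (Set.range fun pr : ColPair n => pluck n pr.1.1 pr.1.2) := by
  ext f
  refine ⟨fun hf => ?_, fun hf g => ?_⟩
  · rw [← leftTranslate_inv_entryMatrix_of_invariant hf 0]
    exact leftTranslate_inv_entryMatrix_mem_adjoin 0 f
  · exact Algebra.adjoin_le (S := AlgHom.equalizer (act n g) (AlgHom.id ℂ (Bn n)))
      (Set.range_subset_iff.2 fun pr => act_pluck g _ _) hf

end Invariants

section Relations

variable {n : ℕ}

noncomputable abbrev plueckerIdeal (n : ℕ) : Ideal (MvPolynomial (ColPair n) ℂ) :=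
  Ideal.span (plueckerRels n ∪ unitRels n)

noncomputable def plueckerVar (u v : Fin n × Fin 2) : MvPolynomial (ColPair n) ℂ :=
  if h : colIdx n u < colIdx n v then X ⟨(u, v), h⟩
  else if h' : colIdx n v < colIdx n u then -X ⟨(v, u), h'⟩ else 0

theorem plueckerVar_of_lt {u v : Fin n × Fin 2} (h : colIdx n u < colIdx n v) :
    plueckerVar u v = X ⟨(u, v), h⟩ :=
  dif_pos h

theorem plueckerVar_of_gt {u v : Fin n × Fin 2} (h : colIdx n v < colIdx n u) :
    plueckerVar u v = -X ⟨(v, u), h⟩ := by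
  rw [plueckerVar, dif_neg h.not_gt, dif_pos h]

theorem plueckerVar_self (u : Fin n × Fin 2) : plueckerVar u u = 0 := by
  simp [plueckerVar]

local notation "π" => Ideal.Quotient.mk (plueckerIdeal _)

theorem mk_X_cols_eq_one (i : Fin n) (h : colIdx n (i, 0) < colIdx n (i, 1)) :
    π (X ⟨((i, 0), (i, 1)), h⟩) = 1 := by
  rw [← sub_eq_zero, ← map_one π, ← map_sub, Ideal.Quotient.eq_zero_iff_mem]
  exact Ideal.subset_span (Or.inr ⟨i, rfl⟩)

theorem mk_plueckerRel {c₁ c₂ c₃ c₄ : Fin n × Fin 2} (h₁₂ : colIdx n c₁ < colIdx n c₂)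
    (h₂₃ : colIdx n c₂ < colIdx n c₃) (h₃₄ : colIdx n c₃ < colIdx n c₄)
    (h₁₃ : colIdx n c₁ < colIdx n c₃) (h₁₄ : colIdx n c₁ < colIdx n c₄)
    (h₂₄ : colIdx n c₂ < colIdx n c₄) :
    π (X ⟨(c₁, c₂), h₁₂⟩) * π (X ⟨(c₃, c₄), h₃₄⟩)
        + π (X ⟨(c₁, c₄), h₁₄⟩) * π (X ⟨(c₂, c₃), h₂₃⟩)
      - π (X ⟨(c₁, c₃), h₁₃⟩) * π (X ⟨(c₂, c₄), h₂₄⟩) = 0 := by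
  simp only [← map_mul, ← map_add, ← map_sub, Ideal.Quotient.eq_zero_iff_mem]
  exact Ideal.subset_span (Or.inl ⟨c₁, c₂, c₃, c₄, h₁₂, h₂₃, h₃₄, rfl⟩)

theorem plueckerIdeal_le_ker :
    plueckerIdeal n ≤ RingHom.ker (aeval fun pr : ColPair n => pluck n pr.1.1 pr.1.2) := by
  rw [Ideal.span_le]
  rintro r (⟨c₁, c₂, c₃, c₄, h₁₂, h₂₃, h₃₄, rfl⟩ | ⟨i, rfl⟩)
  · simp only [SetLike.mem_coe, RingHom.mem_ker, map_sub, map_add, map_mul, aeval_X, pluck]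
    ring
  · simp only [SetLike.mem_coe, RingHom.mem_ker, map_sub, map_one, aeval_X, pluck]
    linear_combination xq_det i

variable [NeZero n]

theorem colIdx_zero (a : Fin 2) : colIdx n (0, a) = a := by
  simp [colIdx]

theorem eq_zero_zero_or_eq_zero_one_or_one_lt_colIdx (w : Fin n × Fin 2) :
    w = (0, 0) ∨ w = (0, 1) ∨ 1 < colIdx n w := by
  rcases Nat.lt_or_ge 1 (colIdx n w) with hw | hw
  · exact Or.inr (Or.inr hw)
  · have : colIdx n w = colIdx n (0, 0) ∨ colIdx n w = colIdx n (0, 1) := by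
      simp only [colIdx_zero, Fin.isValue, Fin.val_zero, Fin.val_one]
      omega
    exact this.imp (colIdx_injective ·) (Or.inl <| colIdx_injective ·)

theorem mk_plueckerVar_expansion {u v : Fin n × Fin 2} (h : colIdx n u < colIdx n v) :
    π (plueckerVar (0, 0) u) * π (plueckerVar (0, 1) v)
        - π (plueckerVar (0, 0) v) * π (plueckerVar (0, 1) u) = π (X ⟨(u, v), h⟩) := by
  have h₀₁ : colIdx n (0, 0) < colIdx n (0, 1) := by simp [colIdx_zero]
  have hY := mk_X_cols_eq_one (0 : Fin n) h₀₁
  rcases eq_zero_zero_or_eq_zero_one_or_one_lt_colIdx u with rfl | rfl | hu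
  · rcases eq_zero_zero_or_eq_zero_one_or_one_lt_colIdx v with rfl | rfl | hv
    · exact absurd h (lt_irrefl _)
    · rw [plueckerVar_self, plueckerVar_self, plueckerVar_of_lt h₀₁, plueckerVar_of_gt h₀₁]
      simp only [map_zero, map_neg]
      linear_combination π (X ⟨((0, 0), (0, 1)), h₀₁⟩) * hY
    · rw [plueckerVar_self, plueckerVar_of_gt h₀₁]
      simp only [map_zero, map_neg, plueckerVar_of_lt h]
      linear_combination π (X ⟨((0, 0), v), h⟩) * hY
  · rcases eq_zero_zero_or_eq_zero_one_or_one_lt_colIdx v with rfl | rfl | hv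
    · simp [colIdx_zero] at h
    · exact absurd h (lt_irrefl _)
    · rw [plueckerVar_self, plueckerVar_of_lt h₀₁, plueckerVar_of_lt h]
      simp only [map_zero]
      linear_combination π (X ⟨((0, 1), v), h⟩) * hY
  · have h₀u : colIdx n (0, 0) < colIdx n u := by rw [colIdx_zero]; omega
    have h₁u : colIdx n (0, 1) < colIdx n u := by rw [colIdx_zero]; exact hu
    have h₀v : colIdx n (0, 0) < colIdx n v := h₀u.trans h
    have h₁v : colIdx n (0, 1) < colIdx n v := h₁u.trans h
    rw [plueckerVar_of_lt h₀u, plueckerVar_of_lt h₁u, plueckerVar_of_lt h₀v,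
      plueckerVar_of_lt h₁v]
    linear_combination -mk_plueckerRel h₀₁ h₁u h h₀u h₀v h₁v + π (X ⟨(u, v), h⟩) * hY

/-- `C_0⁻¹ C_i` written in Plücker coordinates: its entries are `-p_{(0,1),(i,c)}` and
`p_{(0,0),(i,c)}`. -/
noncomputable def plueckerFrame (i : Fin n) :
    SpecialLinearGroup (Fin 2) (MvPolynomial (ColPair n) ℂ ⧸ plueckerIdeal n) :=
  ⟨!![-π (plueckerVar (0, 1) (i, 0)), -π (plueckerVar (0, 1) (i, 1));
      π (plueckerVar (0, 0) (i, 0)), π (plueckerVar (0, 0) (i, 1))], by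
    have hi : colIdx n (i, 0) < colIdx n (i, 1) := by simp [colIdx]
    rw [det_fin_two_of]
    linear_combination mk_plueckerVar_expansion hi + mk_X_cols_eq_one i hi⟩

variable (n) in
noncomputable def plueckerRetraction :
    Bn n →ₐ[ℂ] MvPolynomial (ColPair n) ℂ ⧸ plueckerIdeal n :=
  liftSL plueckerFrame

theorem plueckerRetraction_xq_zero (i : Fin n) (c : Fin 2) :
    plueckerRetraction n (xq n i 0 c) = -π (plueckerVar (0, 1) (i, c)) := by
  rw [plueckerRetraction, liftSL_xq]
  fin_cases c <;> rfl

theorem plueckerRetraction_xq_one (i : Fin n) (c : Fin 2) :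
    plueckerRetraction n (xq n i 1 c) = π (plueckerVar (0, 0) (i, c)) := by
  rw [plueckerRetraction, liftSL_xq]
  fin_cases c <;> rfl

theorem plueckerRetraction_pluck (pr : ColPair n) :
    plueckerRetraction n (pluck n pr.1.1 pr.1.2) = π (X pr) := by
  simp only [pluck, map_sub, map_mul, plueckerRetraction_xq_zero, plueckerRetraction_xq_one]
  linear_combination mk_plueckerVar_expansion pr.2

theorem ker_aeval_pluck_le :
    RingHom.ker (aeval fun pr : ColPair n => pluck n pr.1.1 pr.1.2) ≤ plueckerIdeal n := by
  intro p hp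
  have hcomp : (plueckerRetraction n).comp (aeval fun pr : ColPair n => pluck n pr.1.1 pr.1.2)
      = Ideal.Quotient.mkₐ ℂ (plueckerIdeal n) :=
    MvPolynomial.algHom_ext fun pr => by simpa using plueckerRetraction_pluck pr
  rw [← Ideal.Quotient.eq_zero_iff_mem, ← Ideal.Quotient.mkₐ_eq_mk ℂ, ← hcomp,
    AlgHom.comp_apply, RingHom.mem_ker.mp hp, map_zero]

end Relations

/-- The subalgebra of Bₙ = ℂ[SL₂(ℂ)ⁿ] invariant under simultaneous left
multiplication by SL₂(ℂ) is generated by the Plücker invariants p_{(i,a),(j,b)},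
and the ideal of relations among them is generated by the Plücker relations
together with P_{(i,1),(i,2)} - 1. -/
theorem invariants_first_fundamental_theorem (n : ℕ) (hn : 1 ≤ n) :
    ({f : Bn n | ∀ g : Matrix.SpecialLinearGroup (Fin 2) ℂ, act n g f = f}
        = ((Algebra.adjoin ℂ
            (Set.range fun pr : ColPair n => pluck n pr.1.1 pr.1.2) :
              Subalgebra ℂ (Bn n)) : Set (Bn n))) ∧
      RingHom.ker
          (MvPolynomial.aeval (R := ℂ) fun pr : ColPair n => pluck n pr.1.1 pr.1.2)
        = Ideal.span (plueckerRels n ∪ unitRels n) := by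
  have : NeZero n := ⟨by omega⟩
  exact ⟨setOf_invariant_eq_adjoin_pluck, le_antisymm ker_aeval_pluck_le plueckerIdeal_le_ker⟩
end

section
/- Let G be a group, V a finite type, and T a simple graph on V which is a tree (connected and acyclic). Suppose h assigns to every pair of adjacent vertices u, v an element h(u,v) ∈ G with h(v,u) = h(u,v)⁻¹. Then there exists a function g : V → G such that for every edge {u,v} of T one has h(u,v) = g(u) · g(v)⁻¹ (equivalently, the gauge transformation (g(w))_{w ∈ V} moves the assignment h to the assignment that is identically 1 on all edges of the tree). (This is the gauge-fixing step showing that, for a spanning tree 𝒯 ⊂ Γ, every point of G^{E(Γ)} can be moved by the G^{V(Γ)}-action to one assigning the identity to all edges of 𝒯.) -/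
/-! Fix a root `r` and let `g v` be the inverse of the product of `h` along the unique path
from `r` to `v`. For an edge `uv` of a tree, one of the paths from `r` to `u` and to `v`
extends the other by that edge, so the two products differ by exactly `h u v`. -/

namespace SimpleGraph

variable {V G : Type*} [Group G] {T : SimpleGraph V}

def Walk.holonomy (h : V → V → G) {u v : V} (p : T.Walk u v) : G :=
  (p.darts.map fun d => h d.fst d.snd).prod

theorem Walk.holonomy_concat (h : V → V → G) {u v w : V} (p : T.Walk u v) (huv : T.Adj v w) :
    (p.concat huv).holonomy h = p.holonomy h * h v w := by
  simp [Walk.holonomy, Walk.darts_concat]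

theorem IsAcyclic.holonomy_eq_mul_of_adj (hT : T.IsAcyclic) {h : V → V → G}
    (hsym : ∀ u v : V, T.Adj u v → h v u = (h u v)⁻¹) {r u v : V}
    {p : T.Walk r u} {q : T.Walk r v} (hp : p.IsPath) (hq : q.IsPath) (huv : T.Adj u v) :
    q.holonomy h = p.holonomy h * h u v := by
  by_cases hv : v ∈ p.support
  · rw [hT.path_concat hq hp huv.symm hv, Walk.holonomy_concat, hsym u v huv]
    group
  · have hu : u ∈ q.support :=
      hT.mem_support_of_ne_mem_support_of_adj_of_isPath hq hp huv.symm hv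
    rw [hT.path_concat hp hq huv hu, Walk.holonomy_concat]

end SimpleGraph

theorem tree_gauge_fixing_general {G V : Type} [Group G]
    (T : SimpleGraph V) (hT : T.IsTree)
    (h : V → V → G) (hsym : ∀ u v : V, T.Adj u v → h v u = (h u v)⁻¹) :
    ∃ g : V → G, ∀ u v : V, T.Adj u v → h u v = g u * (g v)⁻¹ := by
  obtain ⟨r⟩ := hT.connected.nonempty
  choose path hpath using fun v => (hT.existsUnique_path r v).exists
  refine ⟨fun v => ((path v).holonomy h)⁻¹, fun u v huv => ?_⟩
  beta_reduce
  rw [hT.isAcyclic.holonomy_eq_mul_of_adj hsym (hpath u) (hpath v) huv]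
  group

/-- Gauge fixing along a tree: if T is a tree on a finite vertex type V and h assigns
to every pair of adjacent vertices u, v an element h u v of a group G with
h v u = (h u v)⁻¹, then there is g : V → G with h u v = g u * (g v)⁻¹ on every edge. -/
theorem tree_gauge_fixing {G V : Type} [Group G] [Finite V]
    (T : SimpleGraph V) (hT : T.IsTree)
    (h : V → V → G) (hsym : ∀ u v : V, T.Adj u v → h v u = (h u v)⁻¹) :
    ∃ g : V → G, ∀ u v : V, T.Adj u v → h u v = g u * (g v)⁻¹ :=
  tree_gauge_fixing_general T hT h hsym
end
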